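/- In tight competition (both backers must pledge to project 1 for it to succeed), when project 1 is high-quality and project 2 is low-quality (V = (1,0)), observational learning never harms project 1's success probability: for all p₁, p₂ ∈ (1/2, 1), P(x₁=1 | (1,0)) · P(x₂=1 | x₁=1, (1,0)) ≥ P(x₁=1 | (1,0)) · P^{NL}(x₂=1 | (1,0)), where P^{NL}(x₂=1 | (1,0)) = a₂(1+a₂)/2 with a₂ = p₂² + (1−p₂)². -/

import Mathlib

/-!
With `a = p₁² + (1 - p₁)²`, the first backer's pledge probability factorizes,
`P(x₁ = 1 | V) = f(V₁) g(V₂)` with `f(1) = a`, `f(0) = 1 - a`, `g(0) = (1 + a)/2`,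
`g(1) = (2 - a)/2`, and so does the likelihood of the second backer's signals. Hence his
posterior after observing `x₁ = 1` is still a product, and his probability of pledging to
project 1 is `π₁ (1 + π₂) / 2`, where `π₁` and `π₂` are the posterior probabilities that project 1
is good and that project 2 is bad. Since `a ≥ 1/2`, observing `x₁ = 1` is evidence for both
events, so it raises `π₁` and `π₂` for every signal of the second backer, and with them his
pledge probability in every state.
-/
open Finset

/-- Probability of signal pair `s` given quality state `V` for a backer with expertness `p`:
signals are independent per project and correct with probability `p`
(`true` = high quality / high signal). -/
noncomputable def sigProb (p : ℝ) (V s : Bool × Bool) : ℝ :=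
  (if s.1 = V.1 then p else 1 - p) * (if s.2 = V.2 then p else 1 - p)

/-- Bayesian posterior over quality state `V` given own signals `s`, uniform prior. -/
noncomputable def post (p : ℝ) (s V : Bool × Bool) : ℝ :=
  sigProb p V s / ∑ V' : Bool × Bool, sigProb p V' s

/-- Probability of pledging to project 1 given own signals `s`. -/
noncomputable def pledge1 (p : ℝ) (s : Bool × Bool) : ℝ :=
  post p s (true, false) + (1/2) * post p s (true, true)

/-- Probability of pledging to project 2 given own signals `s`. -/
noncomputable def pledge2 (p : ℝ) (s : Bool × Bool) : ℝ :=
  post p s (false, true) + (1/2) * post p s (true, true)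

/-- Probability of abstaining given own signals `s`. -/
noncomputable def abstain (p : ℝ) (s : Bool × Bool) : ℝ :=
  post p s (false, false)

/-- Unconditional (on signals) probability of pledging to project 1 in state `V`. -/
noncomputable def condPledge1 (p : ℝ) (V : Bool × Bool) : ℝ :=
  ∑ s : Bool × Bool, sigProb p V s * pledge1 p s

/-- Unconditional probability of pledging to project 2 in state `V`. -/
noncomputable def condPledge2 (p : ℝ) (V : Bool × Bool) : ℝ :=
  ∑ s : Bool × Bool, sigProb p V s * pledge2 p s

/-- Unconditional probability of abstaining in state `V`. -/
noncomputable def condAbstain (p : ℝ) (V : Bool × Bool) : ℝ :=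
  ∑ s : Bool × Bool, sigProb p V s * abstain p s

/-- Second backer's posterior over state V given that the first backer pledged to
project 1 and own signals s. -/
noncomputable def postOL (p1 p2 : ℝ) (s V : Bool × Bool) : ℝ :=
  condPledge1 p1 V * sigProb p2 V s /
    ∑ V' : Bool × Bool, condPledge1 p1 V' * sigProb p2 V' s

/-- Second backer's probability of pledging to project 1 in true state V, given
that the first backer pledged to project 1, under observational learning. -/
noncomputable def pledge1OL (p1 p2 : ℝ) (V : Bool × Bool) : ℝ :=
  ∑ s : Bool × Bool, sigProb p2 V s *
    (postOL p1 p2 s (true, false) + (1/2) * postOL p1 p2 s (true, true))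

noncomputable def lik (p : ℝ) (v t : Bool) : ℝ := if t = v then p else 1 - p

lemma sigProb_eq_lik (p : ℝ) (V s : Bool × Bool) :
    sigProb p V s = lik p V.1 s.1 * lik p V.2 s.2 := rfl

lemma lik_false (p : ℝ) (t : Bool) : lik p false t = 1 - lik p true t := by
  cases t <;> simp [lik]

lemma lik_nonneg {p : ℝ} (hp0 : 0 ≤ p) (hp1 : p ≤ 1) (v t : Bool) : 0 ≤ lik p v t := by
  unfold lik; split_ifs <;> linarith

lemma lik_le_one {p : ℝ} (hp0 : 0 ≤ p) (hp1 : p ≤ 1) (v t : Bool) : lik p v t ≤ 1 := by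
  unfold lik; split_ifs <;> linarith

lemma sum_sigProb_eq_one (p : ℝ) (s : Bool × Bool) : ∑ V : Bool × Bool, sigProb p V s = 1 := by
  simp only [Fintype.sum_prod_type, Fintype.sum_bool, sigProb_eq_lik, lik_false]
  ring

lemma pledge1_eq (p : ℝ) (s : Bool × Bool) :
    pledge1 p s = lik p true s.1 * (1 + lik p false s.2) / 2 := by
  simp only [pledge1, post, sum_sigProb_eq_one, div_one]
  simp only [sigProb_eq_lik, lik_false p s.2]
  ring

lemma condPledge1_eq (p : ℝ) (V : Bool × Bool) :
    condPledge1 p V =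
      (bif V.1 then p ^ 2 + (1 - p) ^ 2 else 1 - (p ^ 2 + (1 - p) ^ 2)) *
        (bif V.2 then (2 - (p ^ 2 + (1 - p) ^ 2)) / 2 else (1 + (p ^ 2 + (1 - p) ^ 2)) / 2) := by
  obtain ⟨v1, v2⟩ := V
  cases v1 <;> cases v2 <;>
    simp only [condPledge1, pledge1_eq, sigProb_eq_lik, Fintype.sum_prod_type, Fintype.sum_bool, lik,
      cond_true, cond_false, ↓reduceIte, Bool.true_eq_false, Bool.false_eq_true] <;> ring

lemma pledge1_share_of_product (u v : Bool → ℝ) (hu : u false + u true ≠ 0)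
    (hv : v false + v true ≠ 0) :
    u true * v false / ∑ V : Bool × Bool, u V.1 * v V.2
        + 1 / 2 * (u true * v true / ∑ V : Bool × Bool, u V.1 * v V.2)
      = u true / (u false + u true) * (1 + v false / (v false + v true)) / 2 := by
  have hS : ∑ V : Bool × Bool, u V.1 * v V.2 = (u false + u true) * (v false + v true) := by
    simp only [Fintype.sum_prod_type, Fintype.sum_bool]; ring
  rw [hS]
  field_simp
  ring

/-- Posterior probability of an event of prior probability `x` after evidence of likelihood `l₁`
under the event and `l₀` under its complement. -/
noncomputable def bayesUpdate (l₁ l₀ x : ℝ) : ℝ := l₁ * x / (l₁ * x + l₀ * (1 - x))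

lemma le_bayesUpdate {l₁ l₀ x : ℝ} (hl₀ : 0 < l₀) (hl : l₀ ≤ l₁) (hx0 : 0 ≤ x) (hx1 : x ≤ 1) :
    x ≤ bayesUpdate l₁ l₀ x := by
  have hden : 0 < l₁ * x + l₀ * (1 - x) := by nlinarith
  rw [bayesUpdate, le_div_iff₀ hden]
  nlinarith [mul_nonneg hx0 (sub_nonneg.2 hx1)]

lemma half_le_sq_add_sq (p : ℝ) : 1 / 2 ≤ p ^ 2 + (1 - p) ^ 2 := by
  nlinarith [sq_nonneg (2 * p - 1)]

lemma sq_add_sq_lt_one {p : ℝ} (hp0 : 0 < p) (hp1 : p < 1) : p ^ 2 + (1 - p) ^ 2 < 1 := by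
  nlinarith [mul_pos hp0 (sub_pos.2 hp1)]

lemma postOL_pledge_eq {p₁ q : ℝ} (hp₀ : 0 < p₁) (hp₁ : p₁ < 1) (hq₀ : 0 ≤ q) (hq₁ : q ≤ 1)
    (s : Bool × Bool) :
    postOL p₁ q s (true, false) + 1 / 2 * postOL p₁ q s (true, true) =
      bayesUpdate (p₁ ^ 2 + (1 - p₁) ^ 2) (1 - (p₁ ^ 2 + (1 - p₁) ^ 2)) (lik q true s.1) *
        (1 + bayesUpdate ((1 + (p₁ ^ 2 + (1 - p₁) ^ 2)) / 2) ((2 - (p₁ ^ 2 + (1 - p₁) ^ 2)) / 2)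
          (lik q false s.2)) / 2 := by
  set a := p₁ ^ 2 + (1 - p₁) ^ 2
  set u : Bool → ℝ := fun w => (bif w then a else 1 - a) * lik q w s.1
  set v : Bool → ℝ := fun w => (bif w then (2 - a) / 2 else (1 + a) / 2) * lik q w s.2
  have hw : ∀ V, condPledge1 p₁ V * sigProb q V s = u V.1 * v V.2 := fun V => by
    rw [condPledge1_eq, sigProb_eq_lik]; ring
  have ha₀ := half_le_sq_add_sq p₁
  have ha₁ := sq_add_sq_lt_one hp₀ hp₁
  have hx₀ := lik_nonneg hq₀ hq₁ true s.1
  have hx₁ := lik_le_one hq₀ hq₁ true s.1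
  have hy₀ := lik_nonneg hq₀ hq₁ true s.2
  have hy₁ := lik_le_one hq₀ hq₁ true s.2
  have hu : 0 < u false + u true := by
    simp only [u, cond_true, cond_false, lik_false]; nlinarith
  have hv : 0 < v false + v true := by
    simp only [v, cond_true, cond_false, lik_false]; nlinarith
  simp only [postOL, hw]
  rw [pledge1_share_of_product u v hu.ne' hv.ne']
  simp only [u, v, cond_true, cond_false, bayesUpdate, lik_false q s.1, lik_false q s.2]
  ring

lemma pledge1_le_postOL_pledge {p₁ q : ℝ} (hp₀ : 0 < p₁) (hp₁ : p₁ < 1) (hq₀ : 0 ≤ q)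
    (hq₁ : q ≤ 1) (s : Bool × Bool) :
    pledge1 q s ≤ postOL p₁ q s (true, false) + 1 / 2 * postOL p₁ q s (true, true) := by
  have ha₀ := half_le_sq_add_sq p₁
  have ha₁ := sq_add_sq_lt_one hp₀ hp₁
  have hx₀ := lik_nonneg hq₀ hq₁ true s.1
  have hy₀ := lik_nonneg hq₀ hq₁ false s.2
  have hx := le_bayesUpdate (l₁ := p₁ ^ 2 + (1 - p₁) ^ 2) (l₀ := 1 - (p₁ ^ 2 + (1 - p₁) ^ 2))
    (by linarith) (by linarith) hx₀ (lik_le_one hq₀ hq₁ true s.1)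
  have hy := le_bayesUpdate (l₁ := (1 + (p₁ ^ 2 + (1 - p₁) ^ 2)) / 2)
    (l₀ := (2 - (p₁ ^ 2 + (1 - p₁) ^ 2)) / 2) (by linarith) (by linarith) hy₀
    (lik_le_one hq₀ hq₁ false s.2)
  rw [pledge1_eq, postOL_pledge_eq hp₀ hp₁ hq₀ hq₁]
  gcongr
  · exact hx₀.trans hx

lemma condPledge1_le_pledge1OL {p₁ q : ℝ} (hp₀ : 0 < p₁) (hp₁ : p₁ < 1) (hq₀ : 0 ≤ q)
    (hq₁ : q ≤ 1) (V : Bool × Bool) : condPledge1 q V ≤ pledge1OL p₁ q V :=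
  sum_le_sum fun s _ => mul_le_mul_of_nonneg_left (pledge1_le_postOL_pledge hp₀ hp₁ hq₀ hq₁ s)
    (mul_nonneg (lik_nonneg hq₀ hq₁ _ _) (lik_nonneg hq₀ hq₁ _ _))

/-- in tight competition (project 1 succeeds iff both backers pledge
to it), in state V = (1,0) observational learning never harms project 1's success
probability: P(x₁=1|(1,0))·P(x₂=1|x₁=1,(1,0)) ≥ P(x₁=1|(1,0))·a₂(1+a₂)/2,
where a₂ = p₂² + (1−p₂)² gives the no-learning pledge probability. -/
theorem stmt17 (p1 p2 : ℝ) (h1 : 1/2 < p1) (h1' : p1 < 1)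
    (h2 : 1/2 < p2) (h2' : p2 < 1) :
    condPledge1 p1 (true, false) * pledge1OL p1 p2 (true, false)
      ≥ condPledge1 p1 (true, false) *
          ((p2^2 + (1-p2)^2) * (1 + (p2^2 + (1-p2)^2)) / 2) := by
  have hNL : (p2 ^ 2 + (1 - p2) ^ 2) * (1 + (p2 ^ 2 + (1 - p2) ^ 2)) / 2
      = condPledge1 p2 (true, false) := by
    simp only [condPledge1_eq, cond_true, cond_false]; ring
  have hC : 0 ≤ condPledge1 p1 (true, false) := by
    simp only [condPledge1_eq, cond_true, cond_false]; positivity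
  rw [ge_iff_le, hNL]
  exact mul_le_mul_of_nonneg_left
    (condPledge1_le_pledge1OL (by linarith) h1' (by linarith) h2'.le _) hC
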